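/- arXiv:2010.03264 — 4 statements merged into one kernel-verified Lean document; each statement's English description precedes it below -/
import Mathlib

section
/- Let φ(t) = t^p log^γ(e+t) for t ≥ 0, with 1 < p < ∞ and γ ∈ ℝ. Then the conjugate function φ*(s) = sup_{t≥0}(st − φ(t)) satisfies φ*(s) ≍ s^{p'} log^{γ/(1−p)}(e+s) for s ≥ 0, where p' = p/(p−1) and ≍ means two-sided comparability with constants depending only on p and γ. -/
/-!
Write `ψ t = t ^ (p - 1) * log ^ γ (e + t)`, so that `s * t - φ t = t * (s - ψ t)`.
Since `log (e + λ t) ≤ (1 + log λ) * log (e + t)` for `λ ≥ 1`, and `1 + log λ` is dominated by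
any power of `λ`, every `t ↦ t ^ r * log ^ γ (e + t)` with `r > 0` is increasing up to a constant
factor. At `T = s ^ (1 / (p - 1)) * log ^ (γ / (1 - p)) (e + s)` the two logarithms `log (e + T)`
and `log (e + s)` are comparable, hence `ψ T ≍ s`. Splitting `ψ = t ^ r * (t ^ r * log ^ γ (e + t))`
with `r = (p - 1) / 2`, quasi-monotonicity of the second factor gives `ψ (κ T) ≤ s / 2` for a small
constant `κ`, so `φ* s ≥ κ s T / 2`, and `ψ t ≥ s` for `t ≥ M T` with a large constant `M`, so
`s t - φ t ≤ M s T` for every `t`. Finally `s T = s ^ p' * log ^ (γ / (1 - p)) (e + s)`.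
-/

open Real

noncomputable def logE (x : ℝ) : ℝ := log (exp 1 + x)

lemma one_le_logE {x : ℝ} (hx : 0 ≤ x) : 1 ≤ logE x := by
  rw [logE, le_log_iff_exp_le (by positivity)]
  linarith

lemma logE_pos {x : ℝ} (hx : 0 ≤ x) : 0 < logE x :=
  one_pos.trans_le (one_le_logE hx)

lemma logE_le_logE {x y : ℝ} (hx : 0 ≤ x) (hxy : x ≤ y) : logE x ≤ logE y :=
  log_le_log (by positivity) (by linarith)

lemma logE_le_of_le_mul {l u t : ℝ} (hl : 1 ≤ l) (hu : 0 ≤ u) (ht : 0 ≤ t) (h : t ≤ l * u) :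
    logE t ≤ (1 + log l) * logE u := by
  have hmul : exp 1 + t ≤ l * (exp 1 + u) := by nlinarith [exp_pos 1]
  have hlog : logE t ≤ log l + logE u := by
    unfold logE
    rw [← log_mul (by positivity) (by positivity)]
    exact log_le_log (by positivity) hmul
  nlinarith [log_nonneg hl, one_le_logE hu]

lemma one_add_log_le_mul_rpow {x ε : ℝ} (hx : 1 ≤ x) (hε : 0 < ε) :
    1 + log x ≤ (1 + ε⁻¹) * x ^ ε := by
  have h1 : 1 ≤ x ^ ε := one_le_rpow hx hε.le
  have h2 : log x ≤ x ^ ε / ε := log_le_rpow_div (by positivity) hε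
  rw [div_eq_mul_inv] at h2
  nlinarith [inv_pos.2 hε]

lemma logE_le_of_le_mul_rpow {K q x y : ℝ} (hK : 0 ≤ K) (hq : 0 ≤ q) (hx : 0 ≤ x) (hy : 0 ≤ y)
    (h : y ≤ K * (exp 1 + x) ^ q) : logE y ≤ (logE K + q) * logE x := by
  have hpow : 1 ≤ (exp 1 + x) ^ q := one_le_rpow (by linarith [add_one_le_exp 1]) hq
  have hmul : exp 1 + y ≤ (exp 1 + K) * (exp 1 + x) ^ q := by nlinarith [exp_pos 1]
  have hlog : logE y ≤ logE K + q * logE x := by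
    unfold logE
    rw [← log_rpow (by positivity : 0 < exp 1 + x), ← log_mul (by positivity) (by positivity)]
    exact log_le_log (by positivity) hmul
  nlinarith [one_le_logE hK, one_le_logE hx]

lemma rpow_le_rpow_abs_mul_rpow {x y D : ℝ} (hx : 0 < x) (hy : 0 < y) (hD : 0 < D)
    (hxy : x ≤ D * y) (hyx : y ≤ D * x) (γ : ℝ) : x ^ γ ≤ D ^ |γ| * y ^ γ := by
  rcases le_total 0 γ with hγ | hγ
  · rw [abs_of_nonneg hγ, ← mul_rpow hD.le hy.le]
    exact rpow_le_rpow hx.le hxy hγ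
  · have h : y / D ≤ x := by rwa [div_le_iff₀ hD, mul_comm]
    calc x ^ γ ≤ (y / D) ^ γ := rpow_le_rpow_of_nonpos (by positivity) h hγ
      _ = D ^ |γ| * y ^ γ := by
        rw [abs_of_nonpos hγ, div_rpow hy.le hD.le, rpow_neg hD.le]; ring

lemma logE_le_mul_div_rpow_mul {u t ε : ℝ} (hu : 0 < u) (hut : u ≤ t) (hε : 0 < ε) :
    logE t ≤ (1 + ε⁻¹) * (t / u) ^ ε * logE u := by
  have hl : 1 ≤ t / u := (one_le_div hu).2 hut
  calc logE t ≤ (1 + log (t / u)) * logE u :=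
        logE_le_of_le_mul hl hu.le (hu.le.trans hut) (div_mul_cancel₀ t hu.ne').ge
    _ ≤ (1 + ε⁻¹) * (t / u) ^ ε * logE u :=
        mul_le_mul_of_nonneg_right (one_add_log_le_mul_rpow hl hε) (logE_pos hu.le).le

lemma exists_pos_mul_rpow_mul_logE_rpow_le {r : ℝ} (hr : 0 < r) (γ : ℝ) :
    ∃ c > 0, ∀ u t, 0 ≤ u → u ≤ t → c * (u ^ r * logE u ^ γ) ≤ t ^ r * logE t ^ γ := by
  rcases le_or_gt 0 γ with hγ | hγ
  · refine ⟨1, one_pos, fun u t hu hut => ?_⟩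
    have hL : logE u ^ γ ≤ logE t ^ γ :=
      rpow_le_rpow (logE_pos hu).le (logE_le_logE hu hut) hγ
    rw [one_mul]
    exact mul_le_mul (rpow_le_rpow hu hut hr.le) hL (rpow_nonneg (logE_pos hu).le γ)
      (rpow_nonneg (hu.trans hut) r)
  set ε := r / -γ
  have hε : 0 < ε := div_pos hr (neg_pos.2 hγ)
  set K := 1 + ε⁻¹
  refine ⟨K ^ γ, by positivity, fun u t hu hut => ?_⟩
  have ht : 0 ≤ t := hu.trans hut
  have hRHS : 0 ≤ t ^ r * logE t ^ γ :=
    mul_nonneg (rpow_nonneg ht r) (rpow_nonneg (logE_pos ht).le γ)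
  rcases hu.eq_or_lt with rfl | hu
  · rwa [zero_rpow hr.ne', zero_mul, mul_zero]
  have ht : 0 < t := hu.trans_le hut
  have hbound : (K * (t / u) ^ ε * logE u) ^ γ ≤ logE t ^ γ :=
    rpow_le_rpow_of_nonpos (logE_pos ht.le) (logE_le_mul_div_rpow_mul hu hut hε) hγ.le
  have hεγ : ε * γ = -r := by simp only [ε]; field_simp [hγ.ne]
  calc K ^ γ * (u ^ r * logE u ^ γ) = t ^ r * (K * (t / u) ^ ε * logE u) ^ γ := by
        rw [mul_rpow (by positivity) (logE_pos hu.le).le, mul_rpow (by positivity) (by positivity),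
          ← rpow_mul (by positivity), hεγ, rpow_neg (by positivity), div_rpow ht.le hu.le]
        field_simp
    _ ≤ t ^ r * logE t ^ γ := mul_le_mul_of_nonneg_left hbound (rpow_nonneg ht.le r)

lemma rpow_mul_logE_rpow_le {a b s : ℝ} (ha : 0 ≤ a) (hs : 0 ≤ s) :
    s ^ a * logE s ^ b ≤ (exp 1 + s) ^ (a + max b 0) := by
  have hes : 0 < exp 1 + s := by positivity
  have hlog : logE s ^ b ≤ (exp 1 + s) ^ max b 0 :=
    calc logE s ^ b ≤ logE s ^ max b 0 :=
          rpow_le_rpow_of_exponent_le (one_le_logE hs) (le_max_left b 0)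
      _ ≤ (exp 1 + s) ^ max b 0 :=
          rpow_le_rpow (logE_pos hs).le (log_le_self hes.le) (le_max_right b 0)
  rw [rpow_add hes]
  exact mul_le_mul (rpow_le_rpow hs (by linarith [exp_pos 1]) ha) hlog
    (rpow_nonneg (logE_pos hs).le b) (rpow_nonneg hes.le a)

lemma exists_le_mul_add_rpow_mul_logE_rpow {a : ℝ} (ha : 0 < a) (b : ℝ) :
    ∃ K ≥ 0, ∀ s, 0 ≤ s → s ≤ K * (exp 1 + s ^ a * logE s ^ b) ^ (2 / a) := by
  obtain ⟨c, hc, hmono⟩ := exists_pos_mul_rpow_mul_logE_rpow_le (half_pos ha) b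
  set c₀ := c * logE 1 ^ b
  have hc₀ : 0 < c₀ := mul_pos hc (rpow_pos_of_pos (logE_pos zero_le_one) b)
  refine ⟨max 1 (c₀⁻¹ ^ (2 / a)), by positivity, fun s hs => ?_⟩
  set T := s ^ a * logE s ^ b
  have hT : 0 ≤ T := mul_nonneg (rpow_nonneg hs a) (rpow_nonneg (logE_pos hs).le b)
  have hbase : 1 ≤ (exp 1 + T) ^ (2 / a) :=
    one_le_rpow (by linarith [add_one_le_exp 1]) (by positivity)
  rcases le_total s 1 with hs1 | hs1
  · calc s ≤ 1 * 1 := by linarith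
      _ ≤ _ := mul_le_mul (le_max_left _ _) hbase zero_le_one (by positivity)
  -- `t ↦ t ^ (a/2) * logE t ^ b` is quasi-increasing, so `T ≥ c₀ * s ^ (a/2)` for `s ≥ 1`.
  have hlow : c₀ * s ^ (a / 2) ≤ T := by
    have h := hmono 1 s zero_le_one hs1
    rw [one_rpow, one_mul] at h
    calc c₀ * s ^ (a / 2) ≤ s ^ (a / 2) * (s ^ (a / 2) * logE s ^ b) := by
          rw [mul_comm]; exact mul_le_mul_of_nonneg_left h (rpow_nonneg hs _)
      _ = T := by rw [← mul_assoc, ← rpow_add' hs (by linarith), add_halves]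
  calc s = (s ^ (a / 2)) ^ (2 / a) := by rw [← rpow_mul hs]; field_simp; rw [rpow_one]
    _ ≤ (c₀⁻¹ * T) ^ (2 / a) := by
        refine rpow_le_rpow (rpow_nonneg hs _) ?_ (by positivity)
        rwa [inv_mul_eq_div, le_div_iff₀ hc₀, mul_comm]
    _ = c₀⁻¹ ^ (2 / a) * T ^ (2 / a) := mul_rpow (by positivity) hT
    _ ≤ max 1 (c₀⁻¹ ^ (2 / a)) * (exp 1 + T) ^ (2 / a) :=
        mul_le_mul (le_max_right _ _) (rpow_le_rpow hT (by linarith [exp_pos 1]) (by positivity))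
          (rpow_nonneg hT _) (by positivity)

lemma exists_logE_rpow_mul_logE_rpow_comparable {a : ℝ} (ha : 0 < a) (b : ℝ) :
    ∃ D > 0, ∀ s, 0 ≤ s → logE (s ^ a * logE s ^ b) ≤ D * logE s ∧
      logE s ≤ D * logE (s ^ a * logE s ^ b) := by
  obtain ⟨K, hK, hKs⟩ := exists_le_mul_add_rpow_mul_logE_rpow ha b
  set D₁ := logE 1 + (a + max b 0)
  set D₂ := logE K + 2 / a
  have hD₁ : 0 < D₁ := by have := logE_pos zero_le_one; positivity
  refine ⟨max D₁ D₂, lt_max_of_lt_left hD₁, fun s hs => ?_⟩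
  have hT : 0 ≤ s ^ a * logE s ^ b :=
    mul_nonneg (rpow_nonneg hs a) (rpow_nonneg (logE_pos hs).le b)
  constructor
  · calc logE (s ^ a * logE s ^ b) ≤ D₁ * logE s :=
          logE_le_of_le_mul_rpow zero_le_one (by positivity) hs hT
            (by rw [one_mul]; exact rpow_mul_logE_rpow_le ha.le hs)
      _ ≤ max D₁ D₂ * logE s := mul_le_mul_of_nonneg_right (le_max_left _ _) (logE_pos hs).le
  · calc logE s ≤ D₂ * logE (s ^ a * logE s ^ b) :=
          logE_le_of_le_mul_rpow hK (by positivity) hT hs (hKs s hs)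
      _ ≤ max D₁ D₂ * logE (s ^ a * logE s ^ b) :=
          mul_le_mul_of_nonneg_right (le_max_right _ _) (logE_pos hT).le

section Conjugate

variable {p : ℝ}

-- Up to constants, the solution `t` of `t ^ (p - 1) * logE t ^ γ = s`.
noncomputable def approxArgmax (p γ s : ℝ) : ℝ := s ^ (1 / (p - 1)) * logE s ^ (γ / (1 - p))

lemma approxArgmax_nonneg (γ : ℝ) {s : ℝ} (hs : 0 ≤ s) : 0 ≤ approxArgmax p γ s :=
  mul_nonneg (rpow_nonneg hs _) (rpow_nonneg (logE_pos hs).le _)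

lemma rpow_mul_logE_rpow_eq_mul_approxArgmax (hp : 1 < p) (γ : ℝ) {s : ℝ} (hs : 0 ≤ s) :
    s ^ (p / (p - 1)) * logE s ^ (γ / (1 - p)) = s * approxArgmax p γ s := by
  have hp' : 1 + 1 / (p - 1) = p / (p - 1) := by field_simp [(sub_pos.2 hp).ne']; ring
  rw [approxArgmax, ← mul_assoc, ← hp', rpow_add' hs (by rw [hp']; positivity), rpow_one]

lemma rpow_sub_one_eq_mul (hp : 1 < p) {t : ℝ} (ht : 0 ≤ t) :
    t ^ (p - 1) = t ^ ((p - 1) / 2) * t ^ ((p - 1) / 2) := by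
  rw [← rpow_add' ht (by linarith), add_halves]

lemma rpow_eq_mul_rpow_sub_one (hp : 1 < p) {t : ℝ} (ht : 0 ≤ t) : t ^ p = t * t ^ (p - 1) := by
  conv_lhs => rw [show p = 1 + (p - 1) by ring]
  rw [rpow_add' ht (by linarith), rpow_one]

lemma exists_rpow_mul_logE_rpow_approxArgmax_comparable (hp : 1 < p) (γ : ℝ) :
    ∃ C > 0, ∀ s, 0 ≤ s →
      s ≤ C * (approxArgmax p γ s ^ (p - 1) * logE (approxArgmax p γ s) ^ γ) ∧
      approxArgmax p γ s ^ (p - 1) * logE (approxArgmax p γ s) ^ γ ≤ C * s := by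
  have hp1 : p - 1 ≠ 0 := (sub_pos.2 hp).ne'
  obtain ⟨D, hD, hcomp⟩ :=
    exists_logE_rpow_mul_logE_rpow_comparable (one_div_pos.2 (sub_pos.2 hp)) (γ / (1 - p))
  refine ⟨D ^ |γ|, by positivity, fun s hs => ?_⟩
  set T := approxArgmax p γ s
  have hT : 0 ≤ T := approxArgmax_nonneg γ hs
  have hLs := logE_pos hs
  have hLT := logE_pos hT
  obtain ⟨hTs, hsT⟩ := hcomp s hs
  have hpow : T ^ (p - 1) = s * logE s ^ (-γ) := by
    rw [show T = s ^ (1 / (p - 1)) * logE s ^ (γ / (1 - p)) from rfl,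
      mul_rpow (rpow_nonneg hs _) (rpow_nonneg hLs.le _), ← rpow_mul hs, ← rpow_mul hLs.le,
      one_div_mul_cancel hp1, rpow_one, div_mul_eq_mul_div, ← neg_sub p 1, div_neg,
      mul_div_assoc, div_self hp1, mul_one]
  have hcancel : logE s ^ (-γ) * logE s ^ γ = 1 := by
    rw [← rpow_add hLs, neg_add_cancel, rpow_zero]
  have hs' : 0 ≤ s * logE s ^ (-γ) := mul_nonneg hs (rpow_nonneg hLs.le _)
  rw [hpow]
  constructor
  · calc s = s * logE s ^ (-γ) * logE s ^ γ := by linear_combination -s * hcancel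
      _ ≤ s * logE s ^ (-γ) * (D ^ |γ| * logE T ^ γ) :=
          mul_le_mul_of_nonneg_left (rpow_le_rpow_abs_mul_rpow hLs hLT hD hsT hTs γ) hs'
      _ = D ^ |γ| * (s * logE s ^ (-γ) * logE T ^ γ) := by ring
  · calc s * logE s ^ (-γ) * logE T ^ γ ≤ s * logE s ^ (-γ) * (D ^ |γ| * logE s ^ γ) :=
          mul_le_mul_of_nonneg_left (rpow_le_rpow_abs_mul_rpow hLT hLs hD hTs hsT γ) hs'
      _ = D ^ |γ| * s := by linear_combination (D ^ |γ| * s) * hcancel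

lemma exists_sub_le_mul_rpow_mul_logE_rpow (hp : 1 < p) (γ : ℝ) :
    ∃ C > 0, ∀ s t, 0 ≤ s → 0 ≤ t →
      s * t - t ^ p * logE t ^ γ ≤ C * s ^ (p / (p - 1)) * logE s ^ (γ / (1 - p)) := by
  set r := (p - 1) / 2
  have hr : 0 < r := half_pos (sub_pos.2 hp)
  obtain ⟨c, hc, hmono⟩ := exists_pos_mul_rpow_mul_logE_rpow_le hr γ
  obtain ⟨C, hC, hcomp⟩ := exists_rpow_mul_logE_rpow_approxArgmax_comparable hp γ
  set M := max 1 ((C / c) ^ r⁻¹)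
  have hM : C ≤ c * M ^ r :=
    calc C = c * ((C / c) ^ r⁻¹) ^ r := by
          rw [rpow_inv_rpow (by positivity) hr.ne']; field_simp
      _ ≤ c * M ^ r := mul_le_mul_of_nonneg_left
          (rpow_le_rpow (by positivity) (le_max_right _ _) hr.le) hc.le
  refine ⟨M, by positivity, fun s t hs ht => ?_⟩
  rw [mul_assoc, rpow_mul_logE_rpow_eq_mul_approxArgmax hp γ hs, rpow_eq_mul_rpow_sub_one hp ht,
    mul_assoc]
  set T := approxArgmax p γ s
  have hT : 0 ≤ T := approxArgmax_nonneg γ hs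
  have hθT : 0 ≤ T ^ r * logE T ^ γ :=
    mul_nonneg (rpow_nonneg hT r) (rpow_nonneg (logE_pos hT).le γ)
  have hψt : 0 ≤ t ^ (p - 1) * logE t ^ γ :=
    mul_nonneg (rpow_nonneg ht _) (rpow_nonneg (logE_pos ht).le γ)
  rcases le_total t (M * T) with hsmall | hlarge
  · calc s * t - t * (t ^ (p - 1) * logE t ^ γ) ≤ s * (M * T) := by
          nlinarith [mul_le_mul_of_nonneg_left hsmall hs, mul_nonneg ht hψt]
      _ = M * (s * T) := by ring
  have hs_le : s ≤ t ^ (p - 1) * logE t ^ γ :=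
    calc s ≤ C * (T ^ (p - 1) * logE T ^ γ) := (hcomp s hs).1
      _ = C * T ^ r * (T ^ r * logE T ^ γ) := by rw [rpow_sub_one_eq_mul hp hT]; ring
      _ ≤ c * M ^ r * T ^ r * (T ^ r * logE T ^ γ) := by gcongr
      _ = (M * T) ^ r * (c * (T ^ r * logE T ^ γ)) := by
          rw [mul_rpow (by positivity) hT]; ring
      _ ≤ t ^ r * (t ^ r * logE t ^ γ) :=
          mul_le_mul (rpow_le_rpow (by positivity) hlarge hr.le)
            (hmono T t hT ((le_mul_of_one_le_left hT (le_max_left _ _)).trans hlarge))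
            (mul_nonneg hc.le hθT) (rpow_nonneg ht r)
      _ = t ^ (p - 1) * logE t ^ γ := by rw [rpow_sub_one_eq_mul hp ht]; ring
  have hM0 : 0 ≤ M := zero_le_one.trans (le_max_left _ _)
  nlinarith [mul_le_mul_of_nonneg_left hs_le ht, mul_nonneg hM0 (mul_nonneg hs hT)]

lemma exists_mul_rpow_mul_logE_rpow_le_sub (hp : 1 < p) (γ : ℝ) :
    ∃ c > 0, ∀ s, 0 ≤ s → ∃ t, 0 ≤ t ∧
      c * s ^ (p / (p - 1)) * logE s ^ (γ / (1 - p)) ≤ s * t - t ^ p * logE t ^ γ := by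
  set r := (p - 1) / 2
  have hr : 0 < r := half_pos (sub_pos.2 hp)
  obtain ⟨c, hc, hmono⟩ := exists_pos_mul_rpow_mul_logE_rpow_le hr γ
  obtain ⟨C, hC, hcomp⟩ := exists_rpow_mul_logE_rpow_approxArgmax_comparable hp γ
  set κ := min 1 ((c / (2 * C)) ^ r⁻¹)
  have hκ : 0 < κ := lt_min one_pos (by positivity)
  have hκC : κ ^ r * C ≤ c / 2 :=
    calc κ ^ r * C ≤ ((c / (2 * C)) ^ r⁻¹) ^ r * C := mul_le_mul_of_nonneg_right
          (rpow_le_rpow hκ.le (min_le_right _ _) hr.le) hC.le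
      _ = c / 2 := by rw [rpow_inv_rpow (by positivity) hr.ne']; field_simp
  refine ⟨κ / 2, by positivity, fun s hs => ?_⟩
  set T := approxArgmax p γ s
  have hT : 0 ≤ T := approxArgmax_nonneg γ hs
  have hκT : 0 ≤ κ * T := mul_nonneg hκ.le hT
  refine ⟨κ * T, hκT, ?_⟩
  rw [mul_assoc, rpow_mul_logE_rpow_eq_mul_approxArgmax hp γ hs,
    rpow_eq_mul_rpow_sub_one hp hκT, mul_assoc]
  have hhalf : (κ * T) ^ (p - 1) * logE (κ * T) ^ γ ≤ s / 2 := by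
    have h := hmono (κ * T) T hκT (mul_le_of_le_one_left hT (min_le_left _ _))
    refine le_of_mul_le_mul_left ?_ hc
    calc c * ((κ * T) ^ (p - 1) * logE (κ * T) ^ γ)
        = κ ^ r * T ^ r * (c * ((κ * T) ^ r * logE (κ * T) ^ γ)) := by
          rw [rpow_sub_one_eq_mul hp hκT, mul_rpow hκ.le hT]; ring
      _ ≤ κ ^ r * T ^ r * (T ^ r * logE T ^ γ) := mul_le_mul_of_nonneg_left h (by positivity)
      _ = κ ^ r * (T ^ (p - 1) * logE T ^ γ) := by rw [rpow_sub_one_eq_mul hp hT]; ring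
      _ ≤ κ ^ r * (C * s) := mul_le_mul_of_nonneg_left (hcomp s hs).2 (by positivity)
      _ ≤ c / 2 * s := by rw [← mul_assoc]; exact mul_le_mul_of_nonneg_right hκC hs
      _ = c * (s / 2) := by ring
  nlinarith [mul_le_mul_of_nonneg_left hhalf hκT, mul_nonneg hs hT]

end Conjugate

/-- Conjugate of t^p log^γ(e+t) is comparable to s^{p'} log^{γ/(1-p)}(e+s). -/
theorem stmt_8 (p γ : ℝ) (hp : 1 < p) (φs : ℝ → ℝ)
    (hconj : ∀ s : ℝ, 0 ≤ s →
      IsLUB {y : ℝ | ∃ t : ℝ, 0 ≤ t ∧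
        y = s * t - t ^ p * (Real.log (Real.exp 1 + t)) ^ γ} (φs s)) :
    ∃ c₁ c₂ : ℝ, 0 < c₁ ∧ 0 < c₂ ∧ ∀ s : ℝ, 0 ≤ s →
      c₁ * s ^ (p / (p - 1)) * (Real.log (Real.exp 1 + s)) ^ (γ / (1 - p)) ≤ φs s ∧
      φs s ≤ c₂ * s ^ (p / (p - 1)) * (Real.log (Real.exp 1 + s)) ^ (γ / (1 - p)) := by
  obtain ⟨c, hc, hlower⟩ := exists_mul_rpow_mul_logE_rpow_le_sub hp γ
  obtain ⟨C, hC, hupper⟩ := exists_sub_le_mul_rpow_mul_logE_rpow hp γ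
  refine ⟨c, C, hc, hC, fun s hs => ⟨?_, ?_⟩⟩
  · obtain ⟨t, ht, hle⟩ := hlower s hs
    exact hle.trans ((hconj s hs).1 ⟨t, ht, rfl⟩)
  · exact (hconj s hs).2 fun y ⟨t, ht, hy⟩ => hy ▸ hupper s t hs ht
end

section
/- Let Ω = (−1,1)², β > 1, and let u₂ be the checkerboard saddle function with |∇u₂(x)| ≤ C|x₁|^{−1} on the region {2|x₂| ≤ |x₁| ≤ 4|x₂|} ∩ Ω and ∇u₂ = 0 elsewhere. Then ∫_Ω |∇u₂|² log^{−β}(e + |∇u₂|) dx < ∞. -/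
/-!
Write `Φ(t) = t² log^{-β}(e + t)` (`logEnergy β`). Although `Φ` need not be monotone,
`Φ(t) ≤ s + 2^β Φ(s)` whenever `0 ≤ t ≤ s`, so on `Ω` the integrand is dominated by `H(x₁)`,
`H(a) = C/|a| + 2^β Φ(C/|a|)`, on the double wedge `2|x₂| ≤ |x₁|` and vanishes outside it.
The slice of the wedge over `x₁ = a` has length `|a|`, and
`|a| H(a) = C + 2^β C² |a|⁻¹ log^{-β}(e + C/|a|)`. This is integrable near `0` because `β > 1`:
up to a bounded factor, `log^{1-β}(e + C/r)` is an antiderivative tending to `0` at `0⁺`.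
-/

open MeasureTheory Set Real Filter Topology Function

lemma one_le_log_exp_add {u : ℝ} (hu : 0 ≤ u) : 1 ≤ log (exp 1 + u) := by
  simpa using log_le_log (exp_pos 1) (le_add_of_nonneg_right hu)

noncomputable def logEnergy (β t : ℝ) : ℝ := t ^ 2 * log (exp 1 + t) ^ (-β)

lemma logEnergy_nonneg (β : ℝ) {t : ℝ} (ht : 0 ≤ t) : 0 ≤ logEnergy β t :=
  mul_nonneg (sq_nonneg t) (rpow_nonneg (zero_le_one.trans (one_le_log_exp_add ht)) _)

lemma measurable_logEnergy (β : ℝ) : Measurable (logEnergy β) := by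
  unfold logEnergy; fun_prop

lemma logEnergy_le_of_le {β t s : ℝ} (hβ : 0 ≤ β) (ht : 0 ≤ t) (hts : t ≤ s) :
    logEnergy β t ≤ s + 2 ^ β * logEnergy β s := by
  have hs : 0 ≤ s := ht.trans hts
  have hLt := one_le_log_exp_add ht
  have hLs := one_le_log_exp_add hs
  have hφs : 0 ≤ 2 ^ β * logEnergy β s := mul_nonneg (by positivity) (logEnergy_nonneg β hs)
  rcases le_or_gt (t ^ 2) s with hsmall | hlarge
  · have : log (exp 1 + t) ^ (-β) ≤ 1 := rpow_le_one_of_one_le_of_nonpos hLt (by linarith)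
    have : logEnergy β t ≤ t ^ 2 := mul_le_of_le_one_right (sq_nonneg t) this
    linarith
  · have hsq : exp 1 + s ≤ (exp 1 + t) ^ 2 := by
      nlinarith [add_one_le_exp 1, exp_pos 1]
    have hlog : log (exp 1 + s) / 2 ≤ log (exp 1 + t) := by
      have := log_le_log (by positivity) hsq
      rw [log_pow] at this
      push_cast at this
      linarith
    have hrpow : log (exp 1 + t) ^ (-β) ≤ 2 ^ β * log (exp 1 + s) ^ (-β) := by
      calc log (exp 1 + t) ^ (-β) ≤ (log (exp 1 + s) / 2) ^ (-β) :=
            rpow_le_rpow_of_nonpos (by linarith) hlog (by linarith)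
        _ = 2 ^ β * log (exp 1 + s) ^ (-β) := by
            rw [div_rpow (by linarith) zero_le_two, rpow_neg zero_le_two, div_inv_eq_mul, mul_comm]
    have : logEnergy β t ≤ 2 ^ β * logEnergy β s := by
      calc logEnergy β t ≤ s ^ 2 * (2 ^ β * log (exp 1 + s) ^ (-β)) :=
            mul_le_mul (pow_le_pow_left₀ ht hts 2) hrpow (by positivity) (sq_nonneg s)
        _ = 2 ^ β * logEnergy β s := by unfold logEnergy; ring
    linarith

lemma integrableOn_Ioc_deriv_of_nonneg_of_tendsto {f f' : ℝ → ℝ} {a b l : ℝ}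
    (hderiv : ∀ x ∈ Ioc a b, HasDerivAt f (f' x) x) (hpos : ∀ x ∈ Ioo a b, 0 ≤ f' x)
    (hlim : Tendsto f (𝓝[>] a) (𝓝 l)) : IntegrableOn f' (Ioc a b) := by
  classical
  have hupdate : ∀ x ≠ a, update f a l =ᶠ[𝓝 x] f := fun x hx =>
    (update_eventuallyEq f a l).filter_mono <|
      le_principal_iff.2 (isOpen_compl_singleton.mem_nhds hx)
  refine intervalIntegral.integrableOn_deriv_of_nonneg (g := update f a l) ?_
    (fun x hx => (hderiv x (Ioo_subset_Ioc_self hx)).congr_of_eventuallyEq (hupdate x hx.1.ne'))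
    hpos
  intro x hx
  rcases hx.1.eq_or_lt with rfl | hax
  · exact continuousWithinAt_update_same.2 <| hlim.mono_left <|
      nhdsWithin_mono _ fun y hy => lt_of_le_of_ne hy.1.1 (Ne.symm hy.2)
  · exact ((hderiv x ⟨hax, hx.2⟩).continuousAt.congr (hupdate x hax.ne').symm).continuousWithinAt

lemma IntervalIntegrable.comp_abs {E : Type*} [NormedAddCommGroup E] {f : ℝ → E} {a : ℝ}
    (ha : 0 ≤ a) (hf : IntervalIntegrable f volume 0 a) :
    IntervalIntegrable (fun x => f |x|) volume (-a) a := by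
  have hneg : IntervalIntegrable (fun x => f |x|) volume (-a) 0 := by
    have := ((IntervalIntegrable.iff_comp_neg (f := f)).1 hf).symm
    rw [neg_zero] at this
    refine (intervalIntegrable_congr fun x hx => ?_).mp this
    rw [uIoc_of_le (by linarith)] at hx
    simp [abs_of_nonpos hx.2]
  refine hneg.trans ((intervalIntegrable_congr fun x hx => ?_).mp hf)
  rw [uIoc_of_le ha] at hx
  simp [abs_of_pos hx.1]

lemma hasDerivAt_log_exp_add_inv_rpow {C γ r : ℝ} (hC : 0 < C) (hr : 0 < r) :
    HasDerivAt (fun x => log (exp 1 + C * x⁻¹) ^ γ)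
      (-γ * C / (r * (exp 1 * r + C)) * log (exp 1 + C * r⁻¹) ^ (γ - 1)) r := by
  have hpos : 0 < exp 1 + C * r⁻¹ := by positivity
  have hL := one_le_log_exp_add (by positivity : 0 ≤ C * r⁻¹)
  have := ((((hasDerivAt_inv hr.ne').const_mul C).const_add (exp 1)).log hpos.ne').rpow_const
    (p := γ) (Or.inl (by linarith))
  convert this using 1
  field_simp

lemma tendsto_log_exp_add_inv_rpow {C γ : ℝ} (hC : 0 < C) (hγ : γ < 0) :
    Tendsto (fun r => log (exp 1 + C * r⁻¹) ^ γ) (𝓝[>] 0) (𝓝 0) :=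
  (tendsto_rpow_neg_atTop (y := -γ) (by linarith)).comp
    (tendsto_log_atTop.comp (tendsto_atTop_add_const_left _ (exp 1)
      (tendsto_inv_nhdsGT_zero.const_mul_atTop hC))) |>.congr fun r => by simp

lemma intervalIntegrable_inv_mul_log_rpow {β C b : ℝ} (hβ : 1 < β) (hC : 0 < C) (hb : 0 ≤ b) :
    IntervalIntegrable (fun r => r⁻¹ * log (exp 1 + C * r⁻¹) ^ (-β)) volume 0 b := by
  set F' : ℝ → ℝ := fun r => (β - 1) * C / (r * (exp 1 * r + C)) * log (exp 1 + C * r⁻¹) ^ (-β)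
  have hF' : IntegrableOn F' (Ioc 0 b) := by
    refine integrableOn_Ioc_deriv_of_nonneg_of_tendsto
      (f := fun r => log (exp 1 + C * r⁻¹) ^ (1 - β)) (fun r hr => ?_) (fun r hr => ?_)
      (tendsto_log_exp_add_inv_rpow hC (by linarith))
    · convert hasDerivAt_log_exp_add_inv_rpow (γ := 1 - β) hC hr.1 using 1
      simp only [F']
      ring_nf
    · have := hr.1
      have := one_le_log_exp_add (by positivity : 0 ≤ C * r⁻¹)
      have : 0 ≤ β - 1 := by linarith
      positivity
  rw [intervalIntegrable_iff_integrableOn_Ioc_of_le hb]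
  refine (hF'.mul_continuousOn_of_subset (g' := fun r => (exp 1 * r + C) / ((β - 1) * C))
    (by fun_prop) measurableSet_Ioc isCompact_Icc Ioc_subset_Icc_self).congr_fun
    (fun r hr => ?_) measurableSet_Ioc
  have := hr.1
  have : β - 1 ≠ 0 := by linarith
  simp only [F']
  field_simp

lemma measurableSet_two_mul_abs_snd_le :
    MeasurableSet {x : ℝ × ℝ | 2 * |x.2| ≤ |x.1|} :=
  measurableSet_le (by fun_prop) (by fun_prop)

lemma volume_setOf_two_mul_abs_le (a : ℝ) :
    volume {b : ℝ | 2 * |b| ≤ |a|} = ENNReal.ofReal |a| := by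
  have : {b : ℝ | 2 * |b| ≤ |a|} = Icc (-(|a| / 2)) (|a| / 2) := by
    ext b
    simp only [mem_ofPred_eq, mem_Icc, ← abs_le]
    constructor <;> intro h <;> linarith
  rw [this, volume_Icc]
  ring_nf

lemma integrableOn_fst_of_two_mul_abs_snd_le {h : ℝ → ℝ} {I : Set ℝ}
    (hh : Measurable h) (hint : IntegrableOn (fun a => |a| * h a) I) :
    IntegrableOn (fun x : ℝ × ℝ => h x.1) ({x | 2 * |x.2| ≤ |x.1|} ∩ I ×ˢ univ) := by
  have hslice (a : ℝ) : MeasurableSet {b : ℝ | 2 * |b| ≤ |a|} :=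
    measurableSet_le (by fun_prop) (by fun_prop)
  rw [← integrableOn_indicator_iff measurableSet_two_mul_abs_snd_le, IntegrableOn,
    Measure.volume_eq_prod, ← Measure.prod_restrict, Measure.restrict_univ]
  refine (integrable_prod_iff ((hh.comp measurable_fst).indicator
    measurableSet_two_mul_abs_snd_le).aestronglyMeasurable).2
    ⟨Eventually.of_forall fun a => ?_, hint.norm.congr (Eventually.of_forall fun a => ?_)⟩
  · change Integrable ({b : ℝ | 2 * |b| ≤ |a|}.indicator fun _ => h a)
    exact (integrable_indicator_iff (hslice a)).2
      (integrableOn_const (by simp [volume_setOf_two_mul_abs_le]))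
  · change _ = ∫ b, ‖{b : ℝ | 2 * |b| ≤ |a|}.indicator (fun _ => h a) b‖
    simp_rw [norm_indicator_eq_indicator_norm]
    rw [integral_indicator_const _ (hslice a), measureReal_def, volume_setOf_two_mul_abs_le,
      ENNReal.toReal_ofReal (abs_nonneg a), norm_mul, Real.norm_of_nonneg (abs_nonneg a),
      smul_eq_mul]

lemma integrableOn_abs_mul_logEnergy_bound {β C b : ℝ} (hβ : 1 < β) (hC : 0 < C) (hb : 0 ≤ b) :
    IntegrableOn (fun a => |a| * (C * |a|⁻¹ + 2 ^ β * logEnergy β (C * |a|⁻¹))) (Ioc (-b) b) := by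
  have hlog : IntegrableOn (fun a => |a|⁻¹ * log (exp 1 + C * |a|⁻¹) ^ (-β)) (Ioc (-b) b) :=
    ((intervalIntegrable_inv_mul_log_rpow hβ hC hb).comp_abs hb).1
  have hmeas : Measurable fun a => |a| * (C * |a|⁻¹ + 2 ^ β * logEnergy β (C * |a|⁻¹)) := by
    have := measurable_logEnergy β
    fun_prop
  refine ((integrableOn_const (C := C) (by simp)).add (hlog.const_mul (2 ^ β * C ^ 2))).mono'
    hmeas.aestronglyMeasurable (Eventually.of_forall fun a => ?_)
  have hnonneg : 0 ≤ |a| * (C * |a|⁻¹ + 2 ^ β * logEnergy β (C * |a|⁻¹)) := by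
    have := logEnergy_nonneg β (by positivity : 0 ≤ C * |a|⁻¹)
    positivity
  rw [Real.norm_of_nonneg hnonneg, Pi.add_apply]
  rcases eq_or_ne a 0 with rfl | ha
  · simp [hC.le]
  · have : |a| ≠ 0 := abs_ne_zero.2 ha
    rw [logEnergy]
    generalize log (exp 1 + C * |a|⁻¹) ^ (-β) = L
    exact le_of_eq (by field_simp)

/-- Finiteness of the energy ∫_Ω |∇u₂|² log^{-β}(e+|∇u₂|) dx for β > 1. -/
theorem stmt_10 (β : ℝ) (hβ : 1 < β) (C : ℝ) (hC : 0 < C) (g : ℝ × ℝ → ℝ)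
    (hmeas : Measurable g)
    (hnn : ∀ x, 0 ≤ g x)
    (hbound : ∀ x : ℝ × ℝ,
      x ∈ ({y : ℝ × ℝ | 2 * |y.2| ≤ |y.1| ∧ |y.1| ≤ 4 * |y.2|} ∩
        (Set.Ioo (-1 : ℝ) 1 ×ˢ Set.Ioo (-1 : ℝ) 1)) → g x ≤ C * |x.1|⁻¹)
    (hzero : ∀ x : ℝ × ℝ,
      x ∉ {y : ℝ × ℝ | 2 * |y.2| ≤ |y.1| ∧ |y.1| ≤ 4 * |y.2|} → g x = 0) :
    IntegrableOn (fun x => (g x) ^ 2 * (Real.log (Real.exp 1 + g x)) ^ (-β))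
      (Set.Ioo (-1 : ℝ) 1 ×ˢ Set.Ioo (-1 : ℝ) 1) volume := by
  change IntegrableOn (fun x => logEnergy β (g x)) _ _
  set H : ℝ → ℝ := fun a => C * |a|⁻¹ + 2 ^ β * logEnergy β (C * |a|⁻¹)
  have hH : Measurable H := by
    have := measurable_logEnergy β
    fun_prop
  have hΩ : MeasurableSet (Ioo (-1 : ℝ) 1 ×ˢ Ioo (-1 : ℝ) 1) :=
    measurableSet_Ioo.prod measurableSet_Ioo
  have hdom : IntegrableOn (fun x => H x.1)
      ({x : ℝ × ℝ | 2 * |x.2| ≤ |x.1|} ∩ Ioo (-1 : ℝ) 1 ×ˢ Ioo (-1 : ℝ) 1) :=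
    (integrableOn_fst_of_two_mul_abs_snd_le hH
      (integrableOn_abs_mul_logEnergy_bound hβ hC zero_le_one)).mono_set
      (inter_subset_inter_right _ (prod_mono Ioo_subset_Ioc_self (subset_univ _)))
  have hwedge : IntegrableOn (fun x => logEnergy β (g x))
      ({x : ℝ × ℝ | 2 * |x.2| ≤ |x.1|} ∩ Ioo (-1 : ℝ) 1 ×ˢ Ioo (-1 : ℝ) 1) := by
    refine hdom.mono' ((measurable_logEnergy β).comp hmeas).aestronglyMeasurable
      (ae_restrict_of_forall_mem (measurableSet_two_mul_abs_snd_le.inter hΩ) fun x hx => ?_)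
    have hgx : g x ≤ C * |x.1|⁻¹ := by
      by_cases hcone : x ∈ {y : ℝ × ℝ | 2 * |y.2| ≤ |y.1| ∧ |y.1| ≤ 4 * |y.2|}
      · exact hbound x ⟨hcone, hx.2⟩
      · rw [hzero x hcone]
        positivity
    rw [Real.norm_of_nonneg (logEnergy_nonneg β (hnn x))]
    exact logEnergy_le_of_le (by linarith) (hnn x) hgx
  refine hwedge.of_forall_sdiff_eq_zero hΩ fun x hx => ?_
  rw [hzero x fun hcone => hx.2 ⟨hcone.1, hx.1⟩]
  simp [logEnergy]
end

section
/- Let ψ be an N-function with conjugate ψ* such that ∫₀ (ψ*)'(1/ρ) dρ = ∞. Then for every ε > 0 and δ > 0, there exist 0 < r₁ < r₂ ≤ ε such that the unique constant c = c_{r₁,r₂} > 0 solving ∫_{r₁}^{r₂} (ψ*)'(c/ρ) dρ = 1 satisfies c ≤ δ. -/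
/-!
The substitution `ρ = δ σ` turns `∫_a^r g (δ / ρ) dρ` into `δ ∫ g (1 / σ) dσ`, which is unbounded
as `a → 0`; so for `r₁` small the integral at `c = δ` exceeds `1`, while at `c = r₁` it is at most
`(r₂ - r₁) g 1 < 1`, and the intermediate value theorem gives a solution `c ∈ [r₁, δ]`.

Since `g` is only nondecreasing, `c ↦ ∫ g (c / ρ)` may be flat. If it takes the value `1` at
`p < q`, then `g (q / ρ) = g (p / ρ)` for every `ρ`, so `g (q / ρ)` lies in the countable set
`g ℚ`; being continuous in `ρ`, it is constant, whence `(r₂ - r₁) g x = 1` for a rational `x`.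
Choosing `r₁` outside the countable set `{r₂ - 1 / g x | x ∈ ℚ}` rules this out.
-/

open MeasureTheory Set Real Filter

theorem eqOn_of_le_of_setIntegral_eq {X : Type*} [TopologicalSpace X] [MeasurableSpace X]
    [OpensMeasurableSpace X] {μ : Measure X} [μ.IsOpenPosMeasure] {U : Set X} (hU : IsOpen U)
    {f₁ f₂ : X → ℝ} (hf₁ : ContinuousOn f₁ U) (hf₂ : ContinuousOn f₂ U)
    (hi₁ : IntegrableOn f₁ U μ) (hi₂ : IntegrableOn f₂ U μ) (hle : ∀ x ∈ U, f₁ x ≤ f₂ x)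
    (heq : ∫ x in U, f₁ x ∂μ = ∫ x in U, f₂ x ∂μ) : EqOn f₁ f₂ U := by
  have hnonneg : 0 ≤ᵐ[μ.restrict U] f₂ - f₁ :=
    (ae_restrict_iff' hU.measurableSet).2 (.of_forall fun x hx => sub_nonneg.2 (hle x hx))
  have hzero : f₂ - f₁ =ᵐ[μ.restrict U] 0 := by
    rw [← setIntegral_eq_zero_iff_of_nonneg_ae hnonneg (hi₂.sub hi₁), Pi.sub_def,
      integral_sub hi₂ hi₁, heq, sub_self]
  exact fun x hx =>
    (sub_eq_zero.1 (Measure.eqOn_open_of_ae_eq hzero hU (hf₂.sub hf₁) continuousOn_const hx)).symm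

theorem exists_lt_setIntegral_Ioo_of_not_integrableOn {f : ℝ → ℝ} {b : ℝ} (hb : 0 < b)
    (hnonneg : ∀ x ∈ Ioc 0 b, 0 ≤ f x) (hloc : ∀ a > 0, IntegrableOn f (Ioc a b))
    (hf : ¬ IntegrableOn f (Ioc 0 b)) (M : ℝ) : ∃ a, 0 < a ∧ a < b ∧ M < ∫ x in Ioo a b, f x := by
  by_contra! hbdd
  have ha : ∀ n : ℕ, 0 < b / (n + 2) ∧ b / (n + 2) < b := fun n =>
    ⟨by positivity, div_lt_self hb (by linarith [n.cast_nonneg (α := ℝ)])⟩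
  refine hf (integrableOn_Ioc_of_intervalIntegral_norm_bounded_left (I := M) (l := atTop)
    (fun n => hloc _ (ha n).1) ?_ (.of_forall fun n => ?_))
  · exact tendsto_const_nhds.div_atTop
      (tendsto_atTop_add_const_right _ 2 tendsto_natCast_atTop_atTop)
  · refine le_of_eq_of_le ?_ (integral_Ioc_eq_integral_Ioo.trans_le (hbdd _ (ha n).1 (ha n).2))
    refine setIntegral_congr_fun measurableSet_Ioc fun x hx => norm_of_nonneg (hnonneg x ?_)
    exact ⟨(ha n).1.trans hx.1, hx.2⟩

theorem setIntegral_Ioo_comp_div_eq_mul (g : ℝ → ℝ) {δ : ℝ} (hδ : 0 < δ) (a b : ℝ) :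
    ∫ ρ in Ioo (δ * a) (δ * b), g (δ / ρ) = δ * ∫ σ in Ioo a b, g σ⁻¹ := by
  have := Measure.setIntegral_comp_smul_of_pos volume (fun ρ => g (δ / ρ)) (Ioo a b) hδ
  rw [LinearOrderedField.smul_Ioo hδ] at this
  simp only [smul_eq_mul, Module.finrank_self, pow_one] at this
  rw [eq_inv_mul_iff_mul_eq₀ hδ.ne'] at this
  simp only [← this, div_mul_cancel_left₀ hδ.ne']

theorem exists_mem_Ioo_forall_sub_mul_ne_one {ι : Type*} [Countable ι] (y : ι → ℝ) (r : ℝ)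
    {a b : ℝ} (hab : a < b) : ∃ t ∈ Ioo a b, ∀ i, (r - t) * y i ≠ 1 := by
  have hdense := (countable_range fun i => r - (y i)⁻¹).dense_compl ℝ
  obtain ⟨t, ht, hat, htb⟩ := hdense.exists_between hab
  refine ⟨t, ⟨hat, htb⟩, fun i hi => ht ⟨i, show r - (y i)⁻¹ = t from ?_⟩⟩
  rw [← eq_inv_of_mul_eq_one_left hi]
  ring

section

variable {g : ℝ → ℝ}

theorem continuousOn_comp_div (hcont : ContinuousOn g (Ioi 0)) {t : ℝ} (ht : 0 < t) :
    ContinuousOn (fun ρ => g (t / ρ)) (Ioi 0) :=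
  hcont.comp (continuousOn_const.div continuousOn_id fun _ hρ => (mem_Ioi.1 hρ).ne')
    fun _ hρ => div_pos ht hρ

theorem integrableOn_comp_div (hcont : ContinuousOn g (Ioi 0)) {t r₁ : ℝ} (ht : 0 < t)
    (hr₁ : 0 < r₁) (r₂ : ℝ) : IntegrableOn (fun ρ => g (t / ρ)) (Icc r₁ r₂) :=
  ((continuousOn_comp_div hcont ht).mono fun _ hρ => hr₁.trans_le hρ.1).integrableOn_compact
    isCompact_Icc

theorem setIntegral_Ioo_comp_div_mono (hpos : ∀ s, 0 < s → 0 < g s)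
    (hcont : ContinuousOn g (Ioi 0)) {t a b c d : ℝ} (ht : 0 < t) (ha : 0 < a) (hab : a ≤ b)
    (hcd : c ≤ d) : ∫ ρ in Ioo b c, g (t / ρ) ≤ ∫ ρ in Ioo a d, g (t / ρ) :=
  setIntegral_mono_set ((integrableOn_comp_div hcont ht ha d).mono_set Ioo_subset_Icc_self)
    ((ae_restrict_iff' measurableSet_Ioo).2
      (.of_forall fun _ hρ => (hpos _ (div_pos ht (ha.trans hρ.1))).le))
    (Ioo_subset_Ioo hab hcd).eventuallyLE

theorem setIntegral_comp_div_self_le (hmono : MonotoneOn g (Ioi 0))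
    (hcont : ContinuousOn g (Ioi 0)) {r₁ r₂ : ℝ} (hr₁ : 0 < r₁) (hr : r₁ ≤ r₂) :
    ∫ ρ in Ioo r₁ r₂, g (r₁ / ρ) ≤ (r₂ - r₁) * g 1 := by
  calc ∫ ρ in Ioo r₁ r₂, g (r₁ / ρ) ≤ ∫ _ in Ioo r₁ r₂, g 1 := by
        refine setIntegral_mono_on
          ((integrableOn_comp_div hcont hr₁ hr₁ r₂).mono_set Ioo_subset_Icc_self)
          (integrableOn_const measure_Ioo_lt_top.ne) measurableSet_Ioo fun ρ hρ => ?_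
        have hρ₀ : 0 < ρ := hr₁.trans hρ.1
        exact hmono (div_pos hr₁ hρ₀) (mem_Ioi.2 one_pos) ((div_le_one hρ₀).2 hρ.1.le)
    _ = (r₂ - r₁) * g 1 := by
        rw [setIntegral_const, Real.volume_real_Ioo_of_le hr, smul_eq_mul]

theorem continuousOn_setIntegral_comp_div (hmono : MonotoneOn g (Ioi 0))
    (hpos : ∀ s, 0 < s → 0 < g s) (hcont : ContinuousOn g (Ioi 0)) {r₁ : ℝ} (hr₁ : 0 < r₁)
    (r₂ : ℝ) : ContinuousOn (fun c => ∫ ρ in Ioo r₁ r₂, g (c / ρ)) (Ioi 0) := by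
  intro t (ht : 0 < t)
  refine (continuousAt_of_dominated (bound := fun ρ => g ((t + 1) / ρ)) ?_ ?_
    ((integrableOn_comp_div hcont (by linarith) hr₁ r₂).mono_set Ioo_subset_Icc_self) ?_)
    |>.continuousWithinAt
  · filter_upwards [Ioi_mem_nhds ht] with c hc
    exact ((continuousOn_comp_div hcont hc).mono fun _ hρ => hr₁.trans hρ.1).aestronglyMeasurable
      measurableSet_Ioo
  · filter_upwards [Ioo_mem_nhds ht (lt_add_one t)] with c hc
    refine (ae_restrict_iff' measurableSet_Ioo).2 (.of_forall fun ρ hρ => ?_)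
    have hρ₀ : 0 < ρ := hr₁.trans hρ.1
    rw [norm_of_nonneg (hpos _ (div_pos hc.1 hρ₀)).le]
    exact hmono (div_pos hc.1 hρ₀) (div_pos (by linarith) hρ₀) (by gcongr; exact hc.2.le)
  · refine (ae_restrict_iff' measurableSet_Ioo).2 (.of_forall fun ρ hρ => ?_)
    have hρ₀ : 0 < ρ := hr₁.trans hρ.1
    exact ContinuousAt.comp (f := fun c => c / ρ)
      (hcont.continuousAt (Ioi_mem_nhds (div_pos ht hρ₀))) (continuous_id.div_const ρ).continuousAt

theorem exists_lt_setIntegral_comp_div (hpos : ∀ s, 0 < s → 0 < g s)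
    (hcont : ContinuousOn g (Ioi 0)) (hdiv : ¬ IntegrableOn (fun σ => g σ⁻¹) (Ioo 0 1))
    {δ r : ℝ} (hδ : 0 < δ) (hr : 0 < r) (M : ℝ) :
    ∃ a, 0 < a ∧ a < r ∧ M < ∫ ρ in Ioo a r, g (δ / ρ) := by
  set b := min 1 (r / δ)
  have hb : 0 < b := lt_min one_pos (div_pos hr hδ)
  have hδb : δ * b ≤ r := by
    calc δ * b ≤ δ * (r / δ) := by gcongr; exact min_le_right _ _
      _ = r := mul_div_cancel₀ r hδ.ne'
  have hloc : ∀ a > 0, ∀ c, IntegrableOn (fun σ => g σ⁻¹) (Ioc a c) := fun a ha c => by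
    simpa only [one_div] using
      (integrableOn_comp_div hcont one_pos ha c).mono_set Ioc_subset_Icc_self
  have hnot : ¬ IntegrableOn (fun σ => g σ⁻¹) (Ioc 0 b) := fun h => hdiv <|
    ((h.union (hloc b hb 1)).mono_set
      (Ioo_subset_Ioc_self.trans (Ioc_union_Ioc_eq_Ioc hb.le (min_le_left _ _)).superset))
  obtain ⟨a, ha, hab, hM⟩ := exists_lt_setIntegral_Ioo_of_not_integrableOn hb
    (fun σ hσ => (hpos _ (inv_pos.2 hσ.1)).le) (fun a ha => hloc a ha b) hnot (M / δ)
  refine ⟨δ * a, mul_pos hδ ha, (mul_lt_mul_of_pos_left hab hδ).trans_le hδb, ?_⟩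
  calc M = δ * (M / δ) := (mul_div_cancel₀ M hδ.ne').symm
    _ < δ * ∫ σ in Ioo a b, g σ⁻¹ := by gcongr
    _ = ∫ ρ in Ioo (δ * a) (δ * b), g (δ / ρ) := (setIntegral_Ioo_comp_div_eq_mul g hδ a b).symm
    _ ≤ _ := setIntegral_Ioo_comp_div_mono hpos hcont hδ (mul_pos hδ ha) le_rfl hδb

theorem exists_rat_setIntegral_comp_div_eq (hmono : MonotoneOn g (Ioi 0))
    (hcont : ContinuousOn g (Ioi 0)) {r₁ r₂ p q : ℝ} (hr₁ : 0 < r₁) (hr : r₁ < r₂)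
    (hp : 0 < p) (hpq : p < q)
    (heq : ∫ ρ in Ioo r₁ r₂, g (p / ρ) = ∫ ρ in Ioo r₁ r₂, g (q / ρ)) :
    ∃ x : ℚ, ∫ ρ in Ioo r₁ r₂, g (q / ρ) = (r₂ - r₁) * g x := by
  have hq : 0 < q := hp.trans hpq
  have hsub : Ioo r₁ r₂ ⊆ Ioi 0 := fun ρ hρ => hr₁.trans hρ.1
  have hflat : EqOn (fun ρ => g (p / ρ)) (fun ρ => g (q / ρ)) (Ioo r₁ r₂) :=
    eqOn_of_le_of_setIntegral_eq isOpen_Ioo ((continuousOn_comp_div hcont hp).mono hsub)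
      ((continuousOn_comp_div hcont hq).mono hsub)
      ((integrableOn_comp_div hcont hp hr₁ r₂).mono_set Ioo_subset_Icc_self)
      ((integrableOn_comp_div hcont hq hr₁ r₂).mono_set Ioo_subset_Icc_self)
      (fun ρ hρ => hmono (div_pos hp (hsub hρ)) (div_pos hq (hsub hρ))
        (div_le_div_of_nonneg_right hpq.le (hsub hρ).le)) heq
  -- `g` is constant on `[p / ρ, q / ρ]`, which contains a rational number
  have hrat : MapsTo (fun ρ => g (q / ρ)) (Ioo r₁ r₂) (range fun x : ℚ => g x) := by
    intro ρ hρ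
    have hρ₀ : 0 < ρ := hsub hρ
    obtain ⟨x, hpx, hxq⟩ := exists_rat_btwn (div_lt_div_of_pos_right hpq hρ₀)
    have hx : (0 : ℝ) < x := (div_pos hp hρ₀).trans hpx
    refine ⟨x, le_antisymm (hmono hx (div_pos hq hρ₀) hxq.le) ?_⟩
    rw [← hflat hρ]
    exact hmono (div_pos hp hρ₀) hx hpx.le
  have hm : (r₁ + r₂) / 2 ∈ Ioo r₁ r₂ := ⟨by linarith, by linarith⟩
  obtain ⟨x, hx⟩ := hrat hm
  -- a continuous function with countably many values is constant on an interval
  have hconst : ∀ ρ ∈ Ioo r₁ r₂, g (q / ρ) = g x := fun ρ hρ =>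
    ((countable_range _).isTotallyDisconnected _ (image_subset_iff.2 hrat)
      (isPreconnected_Ioo.image _ ((continuousOn_comp_div hcont hq).mono hsub))
      (mem_image_of_mem _ hρ) (mem_image_of_mem _ hm)).trans hx.symm
  refine ⟨x, ?_⟩
  rw [setIntegral_congr_fun measurableSet_Ioo hconst, setIntegral_const,
    Real.volume_real_Ioo_of_le hr.le, smul_eq_mul]

theorem eq_of_setIntegral_comp_div_eq (hmono : MonotoneOn g (Ioi 0))
    (hcont : ContinuousOn g (Ioi 0)) {r₁ r₂ s c c' : ℝ} (hr₁ : 0 < r₁) (hr : r₁ < r₂)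
    (hs : ∀ x : ℚ, (r₂ - r₁) * g x ≠ s) (hc : 0 < c) (hc' : 0 < c')
    (h : ∫ ρ in Ioo r₁ r₂, g (c / ρ) = s) (h' : ∫ ρ in Ioo r₁ r₂, g (c' / ρ) = s) : c = c' := by
  by_contra hne
  rcases lt_or_gt_of_ne hne with hlt | hlt
  · obtain ⟨x, hx⟩ :=
      exists_rat_setIntegral_comp_div_eq hmono hcont hr₁ hr hc hlt (h.trans h'.symm)
    exact hs x (hx ▸ h')
  · obtain ⟨x, hx⟩ :=
      exists_rat_setIntegral_comp_div_eq hmono hcont hr₁ hr hc' hlt (h'.trans h.symm)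
    exact hs x (hx ▸ h)

end

theorem stmt_14_general (g : ℝ → ℝ)
    (hmono : MonotoneOn g (Set.Ioi 0))
    (hpos : ∀ s : ℝ, 0 < s → 0 < g s)
    (hcont : ContinuousOn g (Set.Ioi 0))
    (hdiv : ¬ IntegrableOn (fun ρ : ℝ => g ρ⁻¹) (Set.Ioo 0 1) volume) :
    ∀ ε δ : ℝ, 0 < ε → 0 < δ →
      ∃ r₁ r₂ : ℝ, 0 < r₁ ∧ r₁ < r₂ ∧ r₂ ≤ ε ∧
        ∃ c : ℝ, 0 < c ∧ c ≤ δ ∧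
          (∫ ρ in Set.Ioo r₁ r₂, g (c / ρ)) = 1 ∧
          ∀ c' : ℝ, 0 < c' → (∫ ρ in Set.Ioo r₁ r₂, g (c' / ρ)) = 1 → c' = c := by
  intro ε δ hε hδ
  have hg₁ : 0 < g 1 := hpos 1 one_pos
  obtain ⟨r₂, hr₂, hr₂ε, hr₂g⟩ : ∃ r₂, 0 < r₂ ∧ r₂ ≤ ε ∧ r₂ * g 1 < 1 := by
    refine ⟨min ε (g 1)⁻¹ / 2, by positivity, ?_, ?_⟩
    · linarith [min_le_left ε (g 1)⁻¹, lt_min hε (inv_pos.2 hg₁)]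
    · calc min ε (g 1)⁻¹ / 2 * g 1 ≤ (g 1)⁻¹ / 2 * g 1 := by gcongr; exact min_le_right _ _
        _ < 1 := by rw [div_mul_eq_mul_div, inv_mul_cancel₀ hg₁.ne']; norm_num
  obtain ⟨a, ha, har, hbig⟩ := exists_lt_setIntegral_comp_div hpos hcont hdiv hδ (lt_min hr₂ hδ) 1
  obtain ⟨r₁, ⟨hr₁, hr₁a⟩, hr₁g⟩ := exists_mem_Ioo_forall_sub_mul_ne_one (fun x : ℚ => g x) r₂ ha
  have hr₁r₂ : r₁ < r₂ := hr₁a.trans (har.trans_le (min_le_left _ _))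
  have hr₁δ : r₁ < δ := hr₁a.trans (har.trans_le (min_le_right _ _))
  have hlow : ∫ ρ in Ioo r₁ r₂, g (r₁ / ρ) < 1 :=
    (setIntegral_comp_div_self_le hmono hcont hr₁ hr₁r₂.le).trans_lt (by nlinarith)
  have hhigh : 1 < ∫ ρ in Ioo r₁ r₂, g (δ / ρ) :=
    hbig.trans_le (setIntegral_Ioo_comp_div_mono hpos hcont hδ hr₁ hr₁a.le (min_le_left _ _))
  obtain ⟨c, ⟨hr₁c, hcδ⟩, hc⟩ := intermediate_value_Icc hr₁δ.le
    ((continuousOn_setIntegral_comp_div hmono hpos hcont hr₁ r₂).mono fun _ ht => hr₁.trans_le ht.1)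
    ⟨hlow.le, hhigh.le⟩
  have hc₀ : 0 < c := hr₁.trans_le hr₁c
  exact ⟨r₁, r₂, hr₁, hr₁r₂, hr₂ε, c, hc₀, hcδ, hc, fun c' hc' h' =>
    eq_of_setIntegral_comp_div_eq hmono hcont hr₁ hr₁r₂ hr₁g hc' hc₀ h' hc⟩

/-- If ∫₀ (ψ*)'(1/ρ) dρ = ∞ then the normalizing constants c_{r₁,r₂}
    can be made arbitrarily small with r₁ < r₂ ≤ ε. -/
theorem stmt_14 (g : ℝ → ℝ)
    (hmono : MonotoneOn g (Set.Ioi 0))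
    (hpos : ∀ s : ℝ, 0 < s → 0 < g s)
    (hcont : ContinuousOn g (Set.Ioi 0))
    (hinf : Tendsto g atTop atTop)
    (hdiv : ¬ IntegrableOn (fun ρ : ℝ => g ρ⁻¹) (Set.Ioo 0 1) volume) :
    ∀ ε δ : ℝ, 0 < ε → 0 < δ →
      ∃ r₁ r₂ : ℝ, 0 < r₁ ∧ r₁ < r₂ ∧ r₂ ≤ ε ∧
        ∃ c : ℝ, 0 < c ∧ c ≤ δ ∧
          (∫ ρ in Set.Ioo r₁ r₂, g (c / ρ)) = 1 ∧
          ∀ c' : ℝ, 0 < c' → (∫ ρ in Set.Ioo r₁ r₂, g (c' / ρ)) = 1 → c' = c :=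
  stmt_14_general g hmono hpos hcont hdiv
end

section
/- Let α > 1 and M > 0. With η_ε as in the logarithmic cutoff construction (η_ε(r) = (log(1/ε) − log log(1/r))/(log(1/ε) − log log(1/ε)) on (e^{−1/ε}, ε), 0 below, 1 above), one has ∫_{e^{−1/ε}}^{ε} [log^{1−α}(1/r) / (r² log²(1/r) log²(1/ε))] · log^α(e + 2M/(r log(1/r) log(1/ε))) · r dr ≤ C(α,M)/log(1/ε) for all sufficiently small ε > 0; in particular the left-hand side tends to 0 as ε → 0⁺. -/
/-!
On `(e^{-1/ε}, ε)` we have `log (1/r) ≥ log (1/ε) ≥ 1`, so the argument of the outer logarithm is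
at most `e + 2M/r ≤ (e + 2M)/r`, whence `log^α (…) ≤ C log^α (1/r)`. The powers of `log (1/r)`
then cancel down to `C / log² (1/ε) · 1/(r log (1/r))`, whose integral over the interval is
`C (log (1/ε) - log log (1/ε)) / log² (1/ε) ≤ C / log (1/ε)`, since `-log log (1/r)` is an
antiderivative of `1/(r log (1/r))`.
-/

open MeasureTheory Set Real Filter Topology

noncomputable def cutoffEnergyDensity (α M ε r : ℝ) : ℝ :=
  log (1 / r) ^ (1 - α) / (r ^ 2 * log (1 / r) ^ 2 * log (1 / ε) ^ 2) *
    log (exp 1 + 2 * M / (r * log (1 / r) * log (1 / ε))) ^ α * r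

lemma one_le_log_one_div {x : ℝ} (hx : 0 < x) (hxe : x ≤ exp (-1)) : 1 ≤ log (1 / x) := by
  rw [one_div, log_inv, le_neg, ← log_exp (-1)]
  exact log_le_log hx hxe

lemma log_exp_one_add_nonneg {K : ℝ} (hK : 0 ≤ K) : 0 ≤ log (exp 1 + K) :=
  log_nonneg (by linarith [one_le_exp zero_le_one])

lemma log_exp_one_add_div_le {K r : ℝ} (hK : 0 ≤ K) (hr : 0 < r) (hL : 1 ≤ log (1 / r)) :
    log (exp 1 + K / r) ≤ (1 + log (exp 1 + K)) * log (1 / r) := by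
  have he : 1 ≤ exp 1 := one_le_exp zero_le_one
  have hr1 : r ≤ 1 := by
    by_contra! h
    have : log (1 / r) < 0 := log_neg (by positivity) ((div_lt_one hr).2 h)
    linarith
  have hle : exp 1 + K / r ≤ (exp 1 + K) / r := by
    rw [add_div]
    gcongr
    exact le_div_self (by positivity) hr hr1
  have hsplit : log ((exp 1 + K) / r) = log (exp 1 + K) + log (1 / r) := by
    rw [div_eq_mul_one_div, log_mul (by positivity) (by positivity)]
  have hK1 := log_exp_one_add_nonneg hK
  calc log (exp 1 + K / r) ≤ log ((exp 1 + K) / r) := log_le_log (by positivity) hle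
    _ ≤ (1 + log (exp 1 + K)) * log (1 / r) := by rw [hsplit]; nlinarith

lemma cutoffEnergyDensity_nonneg (α : ℝ) {M ε r : ℝ} (hM : 0 ≤ M) (hr : 0 ≤ r)
    (hL : 0 ≤ log (1 / r)) (hΛ : 0 ≤ log (1 / ε)) : 0 ≤ cutoffEnergyDensity α M ε r := by
  have hX : 0 ≤ 2 * M / (r * log (1 / r) * log (1 / ε)) := by positivity
  unfold cutoffEnergyDensity
  have := rpow_nonneg (log_exp_one_add_nonneg hX) α
  have := rpow_nonneg hL (1 - α)
  positivity

lemma cutoffEnergyDensity_le {α M ε r : ℝ} (hα : 0 ≤ α) (hM : 0 ≤ M) (hr : 0 < r)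
    (hΛ : 1 ≤ log (1 / ε)) (hΛL : log (1 / ε) ≤ log (1 / r)) :
    cutoffEnergyDensity α M ε r ≤
      (1 + log (exp 1 + 2 * M)) ^ α / log (1 / ε) ^ 2 * (r * log (1 / r))⁻¹ := by
  set L := log (1 / r)
  set Λ := log (1 / ε)
  set C := 1 + log (exp 1 + 2 * M)
  have hL : 1 ≤ L := hΛ.trans hΛL
  have hC : 0 ≤ C := by linarith [log_exp_one_add_nonneg (by positivity : 0 ≤ 2 * M)]
  have hLΛ : 1 ≤ L * Λ := one_le_mul_of_one_le_of_one_le hL hΛ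
  have hX : 2 * M / (r * L * Λ) ≤ 2 * M / r :=
    div_le_div_of_nonneg_left (by positivity) hr
      (by rw [mul_assoc]; exact le_mul_of_one_le_right hr.le hLΛ)
  have hlog : log (exp 1 + 2 * M / (r * L * Λ)) ≤ C * L :=
    (log_le_log (by positivity) (by linarith)).trans (log_exp_one_add_div_le (by positivity) hr hL)
  have hlog0 := log_exp_one_add_nonneg (by positivity : 0 ≤ 2 * M / (r * L * Λ))
  have hpow : log (exp 1 + 2 * M / (r * L * Λ)) ^ α ≤ C ^ α * L ^ α := by
    rw [← mul_rpow hC (by positivity)]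
    exact rpow_le_rpow hlog0 hlog hα
  have hcancel : L ^ (1 - α) * L ^ α = L := by
    rw [← rpow_add (by positivity), sub_add_cancel, rpow_one]
  have hL0 : 0 ≤ L ^ (1 - α) := rpow_nonneg (by positivity) _
  calc cutoffEnergyDensity α M ε r
      ≤ L ^ (1 - α) / (r ^ 2 * L ^ 2 * Λ ^ 2) * (C ^ α * L ^ α) * r := by
        unfold cutoffEnergyDensity
        gcongr
    _ = C ^ α / Λ ^ 2 * (r * L)⁻¹ := by
        rw [show L ^ (1 - α) / (r ^ 2 * L ^ 2 * Λ ^ 2) * (C ^ α * L ^ α) * r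
          = (L ^ (1 - α) * L ^ α) * C ^ α / (r * L ^ 2 * Λ ^ 2) by field_simp, hcancel]
        field_simp

lemma continuousOn_inv_mul_log_one_div :
    ContinuousOn (fun r : ℝ => (r * log (1 / r))⁻¹) (Ioo 0 1) := by
  refine ContinuousOn.inv₀ (continuousOn_id.mul ((continuousOn_const.div continuousOn_id
    fun x hx => hx.1.ne').log fun x hx => one_div_ne_zero hx.1.ne')) fun x hx => ?_
  have : 0 < log (1 / x) := log_pos ((one_lt_div hx.1).2 hx.2)
  exact (mul_pos hx.1 this).ne'

lemma integral_inv_mul_log_one_div {a b : ℝ} (ha : 0 < a) (hab : a ≤ b) (hb : b < 1) :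
    ∫ r in Ioo a b, (r * log (1 / r))⁻¹ = log (log (1 / a)) - log (log (1 / b)) := by
  have hsub : Icc a b ⊆ Ioo 0 1 := fun x hx => ⟨ha.trans_le hx.1, hx.2.trans_lt hb⟩
  have hderiv : ∀ x ∈ uIcc a b,
      HasDerivAt (fun y => -log (-log y)) (x * log (1 / x))⁻¹ x := by
    intro x hx
    rw [uIcc_of_le hab] at hx
    obtain ⟨hx0, hx1⟩ := hsub hx
    have hlx : log x < 0 := log_neg hx0 hx1
    have hinner : HasDerivAt (fun y => -log y) (-x⁻¹) x := (hasDerivAt_log hx0.ne').neg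
    have hmid : HasDerivAt (fun y => log (-log y)) ((-log x)⁻¹ * -x⁻¹) x :=
      (hasDerivAt_log (by linarith)).comp x hinner
    refine hmid.neg.congr_deriv ?_
    rw [one_div, log_inv]
    field_simp
  rw [← integral_Ioc_eq_integral_Ioo, ← intervalIntegral.integral_of_le hab,
    intervalIntegral.integral_eq_sub_of_hasDerivAt hderiv
      ((continuousOn_inv_mul_log_one_div.mono (uIcc_of_le hab ▸ hsub)).intervalIntegrable)]
  simp only [one_div, log_inv]
  ring

lemma integral_cutoffEnergyDensity_nonneg (α : ℝ) {M ε : ℝ} (hM : 0 ≤ M) (hε : 0 < ε)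
    (hε1 : ε ≤ 1) : 0 ≤ ∫ r in Ioo (exp (-1 / ε)) ε, cutoffEnergyDensity α M ε r := by
  refine setIntegral_nonneg measurableSet_Ioo fun r hr => ?_
  have hr0 : 0 < r := (exp_pos _).trans hr.1
  exact cutoffEnergyDensity_nonneg α hM hr0.le
    (log_nonneg ((one_le_div hr0).2 (hr.2.le.trans hε1))) (log_nonneg ((one_le_div hε).2 hε1))

lemma integral_cutoffEnergyDensity_le {α M ε : ℝ} (hα : 0 ≤ α) (hM : 0 ≤ M) (hε : 0 < ε)
    (hεe : ε ≤ exp (-1)) :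
    ∫ r in Ioo (exp (-1 / ε)) ε, cutoffEnergyDensity α M ε r ≤
      (1 + log (exp 1 + 2 * M)) ^ α / log (1 / ε) := by
  set Λ := log (1 / ε)
  set K := (1 + log (exp 1 + 2 * M)) ^ α / Λ ^ 2
  have hΛ : 1 ≤ Λ := one_le_log_one_div hε hεe
  have hε1 : ε < 1 := hεe.trans_lt (exp_lt_one_iff.2 (by norm_num))
  have hΛε : Λ ≤ 1 / ε := (log_le_sub_one_of_pos (by positivity)).trans (by linarith)
  have haε : exp (-1 / ε) ≤ ε := by
    rw [← le_log_iff_exp_le hε, neg_div, ← neg_neg (log ε), neg_le_neg_iff, ← log_inv,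
      ← one_div]
    exact hΛε
  have hloga : log (1 / exp (-1 / ε)) = 1 / ε := by rw [one_div, log_inv, log_exp]; ring
  have hK : 0 ≤ K := by
    have := log_exp_one_add_nonneg (by positivity : 0 ≤ 2 * M)
    positivity
  have hcont : ContinuousOn (fun r => (r * log (1 / r))⁻¹) (Icc (exp (-1 / ε)) ε) :=
    continuousOn_inv_mul_log_one_div.mono fun x hx =>
      ⟨(exp_pos _).trans_le hx.1, hx.2.trans_lt hε1⟩
  have hint : IntegrableOn (fun r => K * (r * log (1 / r))⁻¹) (Ioo (exp (-1 / ε)) ε) :=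
    IntegrableOn.mono_set ((hcont.integrableOn_compact isCompact_Icc).const_mul K)
      Ioo_subset_Icc_self
  calc ∫ r in Ioo (exp (-1 / ε)) ε, cutoffEnergyDensity α M ε r
      ≤ ∫ r in Ioo (exp (-1 / ε)) ε, K * (r * log (1 / r))⁻¹ := by
        refine integral_mono_of_nonneg ?_ hint ?_ <;>
          filter_upwards [ae_restrict_mem measurableSet_Ioo] with r hr
        all_goals
          have hr0 : 0 < r := (exp_pos _).trans hr.1
          have hΛL : Λ ≤ log (1 / r) :=
            log_le_log (by positivity) (one_div_le_one_div_of_le hr0 hr.2.le)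
        · exact cutoffEnergyDensity_nonneg α hM hr0.le (by linarith) (by linarith)
        · exact cutoffEnergyDensity_le hα hM hr0 hΛ hΛL
    _ = K * (Λ - log Λ) := by
        rw [integral_const_mul, integral_inv_mul_log_one_div (exp_pos _) haε hε1, hloga]
    _ ≤ K * Λ := by gcongr; linarith [log_nonneg hΛ]
    _ = (1 + log (exp 1 + 2 * M)) ^ α / Λ := by simp only [K]; field_simp

lemma tendsto_log_one_div_nhdsGT_zero : Tendsto (fun x : ℝ => log (1 / x)) (𝓝[>] 0) atTop :=
  (tendsto_neg_atBot_atTop.comp tendsto_log_nhdsGT_zero).congr fun x => by simp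

/-- The weighted Orlicz energy of (u−u(0))∇η_ε is O(1/log(1/ε)). -/
theorem stmt_19 (α M : ℝ) (hα : 1 < α) (hM : 0 < M) :
    ∃ C : ℝ, 0 < C ∧ ∃ ε₀ : ℝ, 0 < ε₀ ∧
      (∀ ε : ℝ, ε ∈ Set.Ioo 0 ε₀ →
        (∫ r in Set.Ioo (Real.exp (-1 / ε)) ε,
          (Real.log (1 / r)) ^ (1 - α) /
            (r ^ 2 * (Real.log (1 / r)) ^ 2 * (Real.log (1 / ε)) ^ 2) *
          (Real.log (Real.exp 1 +
            2 * M / (r * Real.log (1 / r) * Real.log (1 / ε)))) ^ α * r) ≤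
          C / Real.log (1 / ε)) ∧
      Tendsto (fun ε : ℝ =>
        ∫ r in Set.Ioo (Real.exp (-1 / ε)) ε,
          (Real.log (1 / r)) ^ (1 - α) /
            (r ^ 2 * (Real.log (1 / r)) ^ 2 * (Real.log (1 / ε)) ^ 2) *
          (Real.log (Real.exp 1 +
            2 * M / (r * Real.log (1 / r) * Real.log (1 / ε)))) ^ α * r)
        (nhdsWithin 0 (Set.Ioi 0)) (nhds 0) := by
  set C := (1 + log (exp 1 + 2 * M)) ^ α
  have hC : 0 < C := by
    have := log_exp_one_add_nonneg (by positivity : 0 ≤ 2 * M)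
    positivity
  have hbound : Tendsto (fun ε => C / log (1 / ε)) (𝓝[>] 0) (𝓝 0) :=
    tendsto_const_nhds.div_atTop tendsto_log_one_div_nhdsGT_zero
  have hsmall : ∀ᶠ ε in 𝓝[>] (0 : ℝ), ε ∈ Ioo 0 (exp (-1)) :=
    Ioo_mem_nhdsGT (exp_pos _)
  refine ⟨C, hC, exp (-1), exp_pos _,
    fun ε hε => integral_cutoffEnergyDensity_le (zero_lt_one.trans hα).le hM.le hε.1 hε.2.le, ?_⟩
  refine tendsto_of_tendsto_of_tendsto_of_le_of_le' tendsto_const_nhds hbound ?_ ?_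
  · filter_upwards [hsmall] with ε hε
    exact integral_cutoffEnergyDensity_nonneg α hM.le hε.1
      (hε.2.le.trans (exp_le_one_iff.2 (by norm_num)))
  · filter_upwards [hsmall] with ε hε
    exact integral_cutoffEnergyDensity_le (zero_lt_one.trans hα).le hM.le hε.1 hε.2.le
end
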